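/- Let M^n ⊂ R^{n+1}, n ≥ 2, be a smooth, closed, strictly convex hypersurface and let q ≥ 1. Then there exists a constant C = C(n, q) > 0 such that ∫_M ( ⎣Ric⎦ − (n−1) )_-^q dμ ≤ C · ∫_M ‖A − g‖^q dμ, where ⎣Ric⎦(x) denotes the smallest eigenvalue of the Ricci tensor of M at x and y_- = max(0, −y) for y ∈ R. -/

import Mathlib

/-!
In a principal frame the Gauss equation gives `Ric(eᵢ, eᵢ) = κᵢ · ∑_{j ≠ i} κⱼ`. Each
`|κⱼ - 1|` is at most `‖A - g‖`, so `κᵢ = 1 + O(‖A - g‖)` and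
`∑_{j ≠ i} κⱼ = (n - 1) + O((n - 1)‖A - g‖)`; since all factors are nonnegative on a convex
hypersurface, this yields the pointwise bound `(n - 1) - ⎣Ric⎦ ≤ 2(n - 1)‖A - g‖`. Raising it
to the power `q` and integrating gives the estimate with `C = (2(n - 1))^q`.
-/

/-- Abstract data of a smooth closed hypersurface `M ⊂ ℝ^{n+1}`: carrier space,
surface measure `vol`, embedding `X`, pointwise-ordered principal curvature
functions `κ`, and the first nonzero eigenvalue `lambda1` of the Laplace–Beltrami
operator. All pointwise curvature tensors of the hypersurface (second fundamental
form, Ricci tensor, mean curvatures) are diagonal in a principal orthonormal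
frame, so their pointwise norms are expressed through `κ`. -/
structure Hypersurface (n : ℕ) where
  M : Type
  [topM : TopologicalSpace M]
  [measM : MeasurableSpace M]
  [borelM : BorelSpace M]
  [compactM : CompactSpace M]
  [nonemptyM : Nonempty M]
  vol : MeasureTheory.Measure M
  [volFinite : MeasureTheory.IsFiniteMeasure vol]
  X : M → EuclideanSpace ℝ (Fin (n+1))
  X_cont : Continuous X
  X_inj : Function.Injective X
  κ : Fin n → M → ℝ
  κ_cont : ∀ i, Continuous (κ i)
  κ_mono : ∀ x, Monotone fun i => κ i x
  lambda1 : ℝ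
  lambda1_pos : 0 < lambda1

attribute [instance] Hypersurface.topM Hypersurface.measM Hypersurface.borelM
  Hypersurface.compactM Hypersurface.nonemptyM Hypersurface.volFinite

namespace Hypersurface

variable {n : ℕ} (S : Hypersurface n)

/-- The volume `|M|`. -/
noncomputable def area : ℝ := (S.vol Set.univ).toReal

/-- The normalized mean curvature `H = (κ₁ + ⋯ + κ_n)/n`. -/
noncomputable def H (x : S.M) : ℝ := (∑ i, S.κ i x) / n

/-- The second normalized mean curvature `H₂`. -/
noncomputable def H2 (x : S.M) : ℝ :=
  ((n.choose 2 : ℝ))⁻¹ *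
    ∑ s ∈ Finset.powersetCard 2 (Finset.univ : Finset (Fin n)), ∏ i ∈ s, S.κ i x

/-- Pointwise norm `‖A‖` of the second fundamental form. -/
noncomputable def normA (x : S.M) : ℝ := Real.sqrt (∑ i, (S.κ i x)^2)

/-- Pointwise norm `‖A⁻¹‖` of the inverse of the second fundamental form. -/
noncomputable def normAinv (x : S.M) : ℝ := Real.sqrt (∑ i, ((S.κ i x)⁻¹)^2)

/-- Pointwise norm `‖A - μ g‖`. -/
noncomputable def normAsub (μ : ℝ) (x : S.M) : ℝ := Real.sqrt (∑ i, (S.κ i x - μ)^2)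

/-- Pointwise norm `‖Å‖ = ‖A - H g‖` of the traceless second fundamental form. -/
noncomputable def normAring (x : S.M) : ℝ := Real.sqrt (∑ i, (S.κ i x - S.H x)^2)

/-- The eigenvalues of the Ricci tensor: by the Gauss equation `Ric = nH·A - A²`,
which is diagonal in a principal frame with eigenvalues `nHκᵢ - κᵢ²`. -/
noncomputable def ricEig (i : Fin n) (x : S.M) : ℝ := n * S.H x * S.κ i x - (S.κ i x)^2

/-- The smallest eigenvalue `⎣Ric⎦(x)` of the Ricci tensor. -/
noncomputable def ricMin (x : S.M) : ℝ := ⨅ i, S.ricEig i x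

/-- Pointwise norm `‖Ric - c g‖`. -/
noncomputable def normRicSub (c : ℝ) (x : S.M) : ℝ :=
  Real.sqrt (∑ i, (S.ricEig i x - c)^2)

/-- The `L^q` norm `‖f‖_q = (∫_M |f|^q)^{1/q}`. -/
noncomputable def Lq (q : ℝ) (f : S.M → ℝ) : ℝ := (∫ x, |f x| ^ q ∂S.vol) ^ (1/q)

/-- The `L^q` norm on a subset `Ω ⊂ M`. -/
noncomputable def LqOn (q : ℝ) (Ω : Set S.M) (f : S.M → ℝ) : ℝ :=
  (∫ x in Ω, |f x| ^ q ∂S.vol) ^ (1/q)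

/-- The sup norm `‖f‖_∞`. -/
noncomputable def supNorm (f : S.M → ℝ) : ℝ := ⨆ x, |f x|

/-- The center of mass `x₀ = |M|⁻¹ ∫_M X`. -/
noncomputable def centerOfMass : EuclideanSpace ℝ (Fin (n+1)) :=
  (S.area)⁻¹ • ∫ x, S.X x ∂S.vol

/-- Mean-convexity: `H > 0` everywhere. -/
def MeanConvex : Prop := ∀ x, 0 < S.H x

/-- Strict convexity: all principal curvatures positive (equivalently `κ₁ > 0`,
since the `κᵢ` are ordered). -/
def StrictlyConvex : Prop := ∀ (x : S.M) (i : Fin n), 0 < S.κ i x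

end Hypersurface

open MeasureTheory Finset

lemma sub_mul_le_two_mul_of_abs_sub_le {k s m N : ℝ} (hk : 0 ≤ k) (hs : 0 ≤ s)
    (hkN : |k - 1| ≤ N) (hsN : |s - m| ≤ m * N) : m - k * s ≤ 2 * m * N := by
  obtain ⟨hk₁, hk₂⟩ := abs_le.mp hkN
  obtain ⟨hs₁, hs₂⟩ := abs_le.mp hsN
  -- for `k < 1` write `m - k * s = m * (1 - k) + k * (m - s)`
  rcases le_total 1 k with h | h
  · nlinarith [mul_le_mul_of_nonneg_right h hs]
  · nlinarith [mul_le_mul_of_nonneg_left h hk, mul_nonneg hk hs]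

lemma abs_le_sqrt_sum_sq {ι : Type*} [Fintype ι] (f : ι → ℝ) (i : ι) :
    |f i| ≤ √(∑ j, f j ^ 2) :=
  Real.abs_le_sqrt (single_le_sum (fun j _ => sq_nonneg (f j)) (mem_univ i))

lemma card_sub_one_sub_sum_mul_sub_sq_le {ι : Type*} [Fintype ι] [DecidableEq ι] (κ : ι → ℝ)
    (hκ : ∀ j, 0 ≤ κ j) (i : ι) :
    (Fintype.card ι - 1 : ℝ) - ((∑ j, κ j) * κ i - κ i ^ 2) ≤
      2 * (Fintype.card ι - 1) * √(∑ j, (κ j - 1) ^ 2) := by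
  set N := √(∑ j, (κ j - 1) ^ 2)
  have hκN (j : ι) : |κ j - 1| ≤ N := abs_le_sqrt_sum_sq (fun j => κ j - 1) j
  have hcard : ((univ.erase i).card : ℝ) = Fintype.card ι - 1 := by
    rw [card_erase_of_mem (mem_univ i), card_univ, Nat.cast_pred (Fintype.card_pos_iff.mpr ⟨i⟩)]
  have hrest : |∑ j ∈ univ.erase i, κ j - (Fintype.card ι - 1)| ≤ (Fintype.card ι - 1) * N :=
    calc |∑ j ∈ univ.erase i, κ j - (Fintype.card ι - 1)|
        = |∑ j ∈ univ.erase i, (κ j - 1)| := by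
          rw [sum_sub_distrib, sum_const, nsmul_eq_mul, mul_one, hcard]
      _ ≤ ∑ j ∈ univ.erase i, |κ j - 1| := abs_sum_le_sum_abs _ _
      _ ≤ ∑ j ∈ univ.erase i, N := sum_le_sum fun j _ => hκN j
      _ = (Fintype.card ι - 1) * N := by rw [sum_const, nsmul_eq_mul, hcard]
  have hsplit : (∑ j, κ j) * κ i - κ i ^ 2 = κ i * ∑ j ∈ univ.erase i, κ j := by
    rw [← add_sum_erase _ _ (mem_univ i)]; ring
  rw [hsplit]
  exact sub_mul_le_two_mul_of_abs_sub_le (hκ i) (sum_nonneg fun j _ => hκ j) (hκN i) hrest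

namespace Hypersurface

variable {n : ℕ} (S : Hypersurface n)

lemma ricEig_eq [NeZero n] (i : Fin n) (x : S.M) :
    S.ricEig i x = (∑ j, S.κ j x) * S.κ i x - S.κ i x ^ 2 := by
  rw [ricEig, H, mul_div_cancel₀ _ (NeZero.ne (n : ℝ))]

lemma sub_ricMin_le [NeZero n] (hS : S.StrictlyConvex) (x : S.M) :
    (n - 1 : ℝ) - S.ricMin x ≤ 2 * (n - 1) * S.normAsub 1 x := by
  obtain ⟨i, hi⟩ := exists_eq_ciInf_of_finite (f := fun i => S.ricEig i x)
  rw [ricMin, ← hi, ricEig_eq]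
  simpa [normAsub] using card_sub_one_sub_sum_mul_sub_sq_le (S.κ · x) (fun j => (hS x j).le) i

lemma continuous_normAsub (μ : ℝ) : Continuous (S.normAsub μ) :=
  Real.continuous_sqrt.comp <| continuous_finsetSum _ fun i _ =>
    ((S.κ_cont i).sub continuous_const).pow 2

end Hypersurface

lemma integral_rpow_le_const_rpow_mul {X : Type*} [MeasurableSpace X] {μ : Measure X}
    {f g : X → ℝ} {c q : ℝ} (hc : 0 ≤ c) (hq : 0 ≤ q) (hf : ∀ x, 0 ≤ f x) (hg : ∀ x, 0 ≤ g x)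
    (hfg : ∀ x, f x ≤ c * g x) (hgq : Integrable (fun x => g x ^ q) μ) :
    ∫ x, f x ^ q ∂μ ≤ c ^ q * ∫ x, g x ^ q ∂μ := by
  rw [← integral_const_mul]
  refine integral_mono_of_nonneg (.of_forall fun x => Real.rpow_nonneg (hf x) q)
    (hgq.const_mul _) (.of_forall fun x => ?_)
  calc f x ^ q ≤ (c * g x) ^ q := Real.rpow_le_rpow (hf x) (hfg x) hq
    _ = c ^ q * g x ^ q := Real.mul_rpow hc (hg x)

/-- for `n ≥ 2` and `q ≥ 1` there is `C = C(n,q) > 0` such that on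
every smooth, closed, strictly convex hypersurface `M^n ⊂ ℝ^{n+1}`,
`∫_M (⎣Ric⎦ − (n−1))_-^q dμ ≤ C · ∫_M ‖A − g‖^q dμ`, where `⎣Ric⎦(x)` is the
smallest eigenvalue of the Ricci tensor at `x` and `y_- = max(0, −y)`. -/
theorem ricci_defect_integral_estimate (n : ℕ) (hn : 2 ≤ n) (q : ℝ) (hq : 1 ≤ q) :
    ∃ C : ℝ, 0 < C ∧
      ∀ S : Hypersurface n, S.StrictlyConvex →
        ∫ x, max 0 (-(S.ricMin x - (n - 1))) ^ q ∂S.vol ≤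
          C * ∫ x, S.normAsub 1 x ^ q ∂S.vol := by
  have hn₁ : (1 : ℝ) < n := by exact_mod_cast hn
  have : NeZero n := ⟨by omega⟩
  refine ⟨(2 * (n - 1)) ^ q, Real.rpow_pos_of_pos (by linarith) q, fun S hS => ?_⟩
  have hq₀ : 0 ≤ q := by linarith
  have hint : Integrable (fun x => S.normAsub 1 x ^ q) S.vol :=
    ((S.continuous_normAsub 1).rpow_const fun _ => .inr hq₀).integrable_of_hasCompactSupport
      (.of_compactSpace _)
  have hc : (0 : ℝ) ≤ 2 * (n - 1) := by linarith
  refine integral_rpow_le_const_rpow_mul hc hq₀ (fun _ => le_max_left _ _)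
    (fun _ => Real.sqrt_nonneg _) (fun x => max_le (mul_nonneg hc (Real.sqrt_nonneg _)) ?_) hint
  linarith [S.sub_ricMin_le hS x]
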